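/- Let D ⊆ ℝᵈ be a closed convex set containing a point e in its interior, and let η(0) ∈ D. Suppose H ∈ ℝᵈ satisfies the Nagumo condition lim_{h→0+} h⁻¹ dist(η(0) + hH, D) = 0. Define H_ε := H − ε(η(0) − e) for ε > 0. Then for every ε > 0 there exists α > 0 such that for all 0 < h ≤ α and all u ∈ ℝᵈ with |u| ≤ α, we have η(0) + hH_ε + hu ∈ D. -/

import Mathlib

/-!
Since `e` is interior, some ball `closedBall e r` lies in `D`. By the Nagumo condition there is
`y ∈ D` with `‖η0 + h • H - y‖ = o(h)`. With `t = h * ε`, convexity puts the whole ball of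
radius `t * r` about `(1 - t) • y + t • e` inside `D`, and the perturbed point
`η0 + h • (H - ε • (η0 - e)) + h • u` lies within `o(h) + O(h²) + h * ‖u‖` of that
centre, which is below `t * r` once `h` and `‖u‖` are small.
-/

open Set Metric Filter Topology

section

variable {E : Type*} [NormedAddCommGroup E] [NormedSpace ℝ E] {D : Set E}

theorem Convex.closedBall_combo_subset (hD : Convex ℝ D) {e y : E} {r t : ℝ}
    (hball : closedBall e r ⊆ D) (hy : y ∈ D) (ht₀ : 0 < t) (ht₁ : t ≤ 1) :
    closedBall ((1 - t) • y + t • e) (t * r) ⊆ D := by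
  intro z hz
  set v := e + t⁻¹ • (z - ((1 - t) • y + t • e))
  have hv : v ∈ closedBall e r := by
    rw [mem_closedBall, dist_eq_norm, add_sub_cancel_left, norm_smul, Real.norm_eq_abs,
      abs_of_pos (inv_pos.2 ht₀), ← dist_eq_norm, inv_mul_le_iff₀ ht₀]
    exact hz
  have hz_eq : (1 - t) • y + t • v = z := by
    simp only [v, smul_add, smul_smul, mul_inv_cancel₀ ht₀.ne', one_smul]
    abel
  exact hz_eq ▸ hD hy (hball hv) (by linarith) ht₀.le (by ring)

theorem eventually_exists_dist_lt_of_tendsto_infDist {x v : E} (hD : D.Nonempty)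
    (hx : Tendsto (fun h : ℝ => h⁻¹ * infDist (x + h • v) D) (𝓝[>] 0) (𝓝 0))
    {c : ℝ} (hc : 0 < c) :
    ∀ᶠ h in 𝓝[>] 0, ∃ y ∈ D, dist (x + h • v) y < c * h := by
  filter_upwards [hx (Iio_mem_nhds hc), self_mem_nhdsWithin] with h hlt (hpos : 0 < h)
  rw [← infDist_lt_iff hD, mul_comm, ← inv_mul_lt_iff₀ hpos]
  exact hlt

theorem Convex.add_smul_perturbed_drift_mem (hD : Convex ℝ D) {e x y H u : E} {r ε h : ℝ}
    (hball : closedBall e r ⊆ D) (hy : y ∈ D) (hε : 0 < ε) (hh : 0 < h) (hhε : h * ε ≤ 1)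
    (hxy : dist (x + h • H) y ≤ ε * r / 3 * h) (hH : h * ‖H‖ ≤ r / 3)
    (hu : ‖u‖ ≤ ε * r / 3) :
    x + h • (H - ε • (x - e)) + h • u ∈ D := by
  have ht : 0 < h * ε := mul_pos hh hε
  refine hD.closedBall_combo_subset hball hy ht hhε ?_
  have hdecomp : x + h • (H - ε • (x - e)) + h • u - ((1 - h * ε) • y + (h * ε) • e)
      = (1 - h * ε) • (x + h • H - y) + (h * ε) • (h • H) + h • u := by
    module
  rw [mem_closedBall, dist_eq_norm, hdecomp]
  calc ‖(1 - h * ε) • (x + h • H - y) + (h * ε) • (h • H) + h • u‖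
      ≤ (1 - h * ε) * ‖x + h • H - y‖ + (h * ε) * (h * ‖H‖) + h * ‖u‖ := by
        refine norm_add₃_le.trans ?_
        simp only [norm_smul, Real.norm_eq_abs, abs_of_nonneg (sub_nonneg.2 hhε),
          abs_of_pos ht, abs_of_pos hh]
        rfl
    _ ≤ 1 * (ε * r / 3 * h) + (h * ε) * (r / 3) + h * (ε * r / 3) := by
        rw [← dist_eq_norm]
        gcongr
        linarith
    _ = h * ε * r := by ring

end

theorem stmt_3_general (d : ℕ) (D : Set (EuclideanSpace ℝ (Fin d)))
    (hconv : Convex ℝ D)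
    (e : EuclideanSpace ℝ (Fin d)) (he : e ∈ interior D)
    (η0 : EuclideanSpace ℝ (Fin d)) (hη0 : η0 ∈ D)
    (H : EuclideanSpace ℝ (Fin d))
    (hNagumo : Tendsto (fun h : ℝ => h⁻¹ * infDist (η0 + h • H) D)
      (nhdsWithin 0 (Ioi 0)) (nhds 0)) :
    ∀ ε : ℝ, 0 < ε → ∃ α : ℝ, 0 < α ∧ ∀ h : ℝ, 0 < h → h ≤ α →
      ∀ u : EuclideanSpace ℝ (Fin d), ‖u‖ ≤ α →
        η0 + h • (H - ε • (η0 - e)) + h • u ∈ D := by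
  intro ε hε
  obtain ⟨r, hr, hball⟩ := nhds_basis_closedBall.mem_iff.1 (mem_interior_iff_mem_nhds.1 he)
  have eventually_mul_le (a : ℝ) {b : ℝ} (hb : 0 < b) :
      ∀ᶠ h in 𝓝[>] (0 : ℝ), h * a ≤ b :=
    nhdsWithin_le_nhds <| ((continuous_id.mul continuous_const).tendsto' 0 0 (by simp)).eventually
      (ge_mem_nhds hb)
  have hsmall := (eventually_exists_dist_lt_of_tendsto_infDist ⟨η0, hη0⟩ hNagumo
    (by positivity : 0 < ε * r / 3)).and
    ((eventually_mul_le ε one_pos).and (eventually_mul_le ‖H‖ (by positivity : 0 < r / 3)))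
  obtain ⟨δ, hδ, hsub⟩ := mem_nhdsGT_iff_exists_Ioc_subset.1 hsmall
  refine ⟨min δ (ε * r / 3), lt_min hδ (by positivity), fun h hh hhα u hu => ?_⟩
  obtain ⟨⟨y, hy, hxy⟩, hhε, hH⟩ := hsub ⟨hh, hhα.trans (min_le_left _ _)⟩
  exact hconv.add_smul_perturbed_drift_mem hball hy hε hh hhε hxy.le hH
    (hu.trans (min_le_right _ _))

/-- Remark 3.2: for a closed convex set `D` with interior point `e`, the Nagumo
condition for `H` at `η(0) ∈ D` yields the uniform interior condition for the
perturbed drift `H_ε = H - ε(η(0) - e)`. -/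
theorem stmt_3 (d : ℕ) (D : Set (EuclideanSpace ℝ (Fin d)))
    (hclosed : IsClosed D) (hconv : Convex ℝ D)
    (e : EuclideanSpace ℝ (Fin d)) (he : e ∈ interior D)
    (η0 : EuclideanSpace ℝ (Fin d)) (hη0 : η0 ∈ D)
    (H : EuclideanSpace ℝ (Fin d))
    (hNagumo : Tendsto (fun h : ℝ => h⁻¹ * infDist (η0 + h • H) D)
      (nhdsWithin 0 (Ioi 0)) (nhds 0)) :
    ∀ ε : ℝ, 0 < ε → ∃ α : ℝ, 0 < α ∧ ∀ h : ℝ, 0 < h → h ≤ α →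
      ∀ u : EuclideanSpace ℝ (Fin d), ‖u‖ ≤ α →
        η0 + h • (H - ε • (η0 - e)) + h • u ∈ D :=
  stmt_3_general d D hconv e he η0 hη0 H hNagumo
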